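/- Let $E > 0$, $m \ge 0$ and let $f$ solve $-f'' - \frac{m(m+1)}{r^2} f = E f$ on $[r_0, r_1]$ with $r_0 > 0$. If $\int_{r_0}^{r_1} \left(f(r)^2 + E^{-1} f'(r)^2\right) dr \le C$, then $f(r_0)^2 + E^{-1} f'(r_0)^2 \le \frac{C}{r_1 - r_0} \exp\left(\frac{m(m+1)}{2\sqrt{E}\, r_0}\right)$. -/

import Mathlib

/-
Write `c = m(m+1)`, `q r = E + c / r²` (so that `f'' = -q f`) and `Q = q (2 r₀)`. The Prüfer-type
bound `|W'| ≤ c W / (√E r²)` for `W = f² + E⁻¹ f'²` loses a factor 2 in the exponent, so instead: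
on `[r₀, 2 r₀]`, where `q ≥ Q`, the energy `(Q f² + f'²) e^Φ` with `Φ' = (q - Q) / √Q` is
nondecreasing, its derivative being `(q - Q) / √Q · (√Q f - f')² e^Φ`, and `Φ` increases there by at
most `c / (4 r₀ √Q)`; beyond `2 r₀` the Liouville energy `f² + f'² / q` is nondecreasing because `q`
decreases. Together, `W r ≥ (E / Q) e^{-c / (4 r₀ √Q)} W r₀` on `[r₀, r₁]`, and `2 log s ≤ s - 1/s`
(for `s = √(Q / E)`) shows that this factor is at least `e^{-c / (2 √E r₀)}`. Integrating the
pointwise bound over `[r₀, r₁]` gives the claim.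
-/

open MeasureTheory Real Set

lemma monotoneOn_Icc_of_hasDerivAt_nonneg {F F' : ℝ → ℝ} {a b : ℝ}
    (hF : ∀ r ∈ Icc a b, HasDerivAt F (F' r) r) (hF' : ∀ r ∈ Icc a b, 0 ≤ F' r) :
    MonotoneOn F (Icc a b) := by
  refine monotoneOn_of_hasDerivWithinAt_nonneg (f' := F') (convex_Icc a b)
    (fun r hr => (hF r hr).continuousAt.continuousWithinAt) (fun r hr => ?_) (fun r hr => ?_)
  all_goals rw [interior_Icc] at hr
  · exact (hF r (Ioo_subset_Icc_self hr)).hasDerivWithinAt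
  · exact hF' r (Ioo_subset_Icc_self hr)

section SturmLiouville

variable {f f' f'' q : ℝ → ℝ} {a b : ℝ}

lemma monotoneOn_energy_mul_exp (hf : ∀ r ∈ Icc a b, HasDerivAt f (f' r) r)
    (hf' : ∀ r ∈ Icc a b, HasDerivAt f' (f'' r) r)
    (hode : ∀ r ∈ Icc a b, f'' r = -q r * f r)
    {Q : ℝ} (hQ : 0 < Q) (hqQ : ∀ r ∈ Icc a b, Q ≤ q r)
    {Φ : ℝ → ℝ} (hΦ : ∀ r ∈ Icc a b, HasDerivAt Φ ((q r - Q) / √Q) r) :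
    MonotoneOn (fun r => (Q * f r ^ 2 + f' r ^ 2) * exp (Φ r)) (Icc a b) := by
  have hsQ : √Q ^ 2 = Q := sq_sqrt hQ.le
  refine monotoneOn_Icc_of_hasDerivAt_nonneg
    (F' := fun r => (q r - Q) / √Q * (√Q * f r - f' r) ^ 2 * exp (Φ r)) (fun r hr => ?_)
    (fun r hr => by have := sub_nonneg.2 (hqQ r hr); positivity)
  refine (((((hf r hr).pow 2).const_mul Q).add ((hf' r hr).pow 2)).mul
    (hΦ r hr).exp).congr_deriv ?_
  simp only [Pi.add_apply, Pi.pow_apply]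
  rw [hode r hr]
  field_simp
  linear_combination (-(q r - Q) * f r ^ 2) * hsQ

lemma monotoneOn_sq_add_sq_div (hf : ∀ r ∈ Icc a b, HasDerivAt f (f' r) r)
    (hf' : ∀ r ∈ Icc a b, HasDerivAt f' (f'' r) r)
    (hode : ∀ r ∈ Icc a b, f'' r = -q r * f r) {q' : ℝ → ℝ}
    (hq : ∀ r ∈ Icc a b, HasDerivAt q (q' r) r) (hq0 : ∀ r ∈ Icc a b, 0 < q r)
    (hq' : ∀ r ∈ Icc a b, q' r ≤ 0) :
    MonotoneOn (fun r => f r ^ 2 + f' r ^ 2 / q r) (Icc a b) := by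
  refine monotoneOn_Icc_of_hasDerivAt_nonneg (F' := fun r => -q' r * (f' r / q r) ^ 2)
    (fun r hr => ?_) (fun r hr => by have := neg_nonneg.2 (hq' r hr); positivity)
  have hqr := (hq0 r hr).ne'
  refine (((hf r hr).pow 2).add (((hf' r hr).pow 2).div (hq r hr) hqr)).congr_deriv ?_
  simp only [Pi.pow_apply]
  rw [hode r hr]
  field_simp
  ring

end SturmLiouville

lemma two_mul_log_le_sub_inv {s : ℝ} (h1 : 1 ≤ s) : 2 * log s ≤ s - s⁻¹ := by
  have := self_le_sinh_iff.2 (log_nonneg h1)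
  rw [sinh_log (by positivity)] at this
  linarith

lemma exp_neg_le_div_mul_exp_neg {E c r : ℝ} (hE : 0 < E) (hr : 0 < r)
    (hc : c = 0 ∨ 4 / 3 ≤ c) :
    exp (-(c / (2 * √E * r))) ≤
      E / (E + c / (2 * r) ^ 2) * exp (-(c / (4 * r * √(E + c / (2 * r) ^ 2)))) := by
  rcases hc with rfl | hc
  · simp [hE.ne']
  set Q := E + c / (2 * r) ^ 2 with hQ_def
  have hQ : 0 < Q := by positivity
  have hsE : 0 < √E := sqrt_pos.2 hE
  have hsE2 : √E ^ 2 = E := sq_sqrt hE.le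
  have hsQ2 : √Q ^ 2 = Q := sq_sqrt hQ.le
  have hratio : Q / E = (√Q / √E) ^ 2 := by rw [div_pow, hsE2, hsQ2]
  have hlog : log (Q / E) ≤ c / (4 * r ^ 2 * √Q * √E) := by
    have h1 : 1 ≤ √Q / √E := by
      rw [one_le_div hsE]
      exact sqrt_le_sqrt (le_add_of_nonneg_right (by positivity))
    calc log (Q / E) = 2 * log (√Q / √E) := by rw [hratio, log_pow]; norm_num
      _ ≤ √Q / √E - (√Q / √E)⁻¹ := two_mul_log_le_sub_inv h1
      _ = c / (4 * r ^ 2 * √Q * √E) := by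
        field_simp
        rw [hsQ2, hsE2, hQ_def]
        field_simp
        ring
  -- Here `c ≥ 4/3` enters: `(2 r √Q)² - (1 + r √E)² = 3 (r √E - 1/3)² + c - 4/3`.
  have hkey : 1 + r * √E ≤ 2 * r * √Q := by
    rw [← pow_le_pow_iff_left₀ (by positivity) (by positivity) two_ne_zero, mul_pow, hsQ2,
      hQ_def]
    field_simp
    nlinarith [sq_nonneg (r * √E - 1 / 3)]
  have hexponent : log (Q / E) + c / (4 * r * √Q) ≤ c / (2 * √E * r) :=
    calc log (Q / E) + c / (4 * r * √Q)
        ≤ c / (4 * r ^ 2 * √Q * √E) * (1 + r * √E) := by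
          field_simp at hlog ⊢
          linarith
      _ ≤ c / (4 * r ^ 2 * √Q * √E) * (2 * r * √Q) := by gcongr
      _ = c / (2 * √E * r) := by field_simp; ring
  calc exp (-(c / (2 * √E * r)))
      ≤ exp (-(log (Q / E) + c / (4 * r * √Q))) := exp_le_exp.2 (neg_le_neg hexponent)
    _ = E / Q * exp (-(c / (4 * r * √Q))) := by
      rw [neg_add, exp_add, exp_neg, exp_log (by positivity), inv_div]

section RadialSchrodinger

variable {E c r0 : ℝ} {f f' f'' : ℝ → ℝ}

lemma energy_lower_bound_of_le_two_mul {b : ℝ} (hE : 0 < E) (hc : 0 ≤ c) (hr0 : 0 < r0)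
    (hb : b ≤ 2 * r0) (hf : ∀ r ∈ Icc r0 b, HasDerivAt f (f' r) r)
    (hf' : ∀ r ∈ Icc r0 b, HasDerivAt f' (f'' r) r)
    (hode : ∀ r ∈ Icc r0 b, f'' r = -(E + c / r ^ 2) * f r) :
    ∀ s ∈ Icc r0 b,
      ((E + c / (2 * r0) ^ 2) * f r0 ^ 2 + f' r0 ^ 2) *
          exp (-(c / (4 * r0 * √(E + c / (2 * r0) ^ 2)))) ≤
        (E + c / (2 * r0) ^ 2) * f s ^ 2 + f' s ^ 2 := by
  intro s hs
  set Q := E + c / (2 * r0) ^ 2 with hQ_def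
  have hQ : 0 < Q := by positivity
  have hpos : ∀ r ∈ Icc r0 b, 0 < r := fun r hr => hr0.trans_le hr.1
  set Φ : ℝ → ℝ := fun r => -(c / r + c / (2 * r0) ^ 2 * r) / √Q with hΦ_def
  have hΦ : ∀ r ∈ Icc r0 b, HasDerivAt Φ ((E + c / r ^ 2 - Q) / √Q) r := by
    intro r hr
    have hr0' := (hpos r hr).ne'
    refine ((((hasDerivAt_const r c).div (hasDerivAt_id r) hr0').add
      ((hasDerivAt_id r).const_mul (c / (2 * r0) ^ 2))).neg.div_const √Q).congr_deriv ?_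
    simp only [id, hQ_def]
    field_simp
    ring
  have hqQ : ∀ r ∈ Icc r0 b, Q ≤ E + c / r ^ 2 := by
    intro r hr
    have := hpos r hr
    have := hr.2.trans hb
    simp only [hQ_def]
    gcongr
  have hmono := monotoneOn_energy_mul_exp (q := fun r => E + c / r ^ 2) hf hf' hode hQ hqQ hΦ
    ⟨le_rfl, hs.1.trans hs.2⟩ hs hs.1
  have hincr : -(c / (4 * r0 * √Q)) ≤ Φ r0 - Φ s := by
    have := hpos s hs
    rw [← sub_nonneg]
    have key : Φ r0 - Φ s - -(c / (4 * r0 * √Q)) =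
        c * (s - 2 * r0) ^ 2 / (4 * r0 ^ 2 * s * √Q) := by
      simp only [hΦ_def]
      field_simp
      ring
    rw [key]
    positivity
  calc (Q * f r0 ^ 2 + f' r0 ^ 2) * exp (-(c / (4 * r0 * √Q)))
      ≤ (Q * f r0 ^ 2 + f' r0 ^ 2) * exp (Φ r0 - Φ s) := by gcongr
    _ = (Q * f r0 ^ 2 + f' r0 ^ 2) * exp (Φ r0) / exp (Φ s) := by rw [exp_sub, mul_div_assoc]
    _ ≤ Q * f s ^ 2 + f' s ^ 2 := div_le_of_le_mul₀ (exp_pos _).le (by positivity) hmono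

lemma sq_add_inv_mul_sq_lower_bound {r1 : ℝ} (hE : 0 < E) (hc : 0 ≤ c) (hr0 : 0 < r0)
    (hf : ∀ r ∈ Icc r0 r1, HasDerivAt f (f' r) r)
    (hf' : ∀ r ∈ Icc r0 r1, HasDerivAt f' (f'' r) r)
    (hode : ∀ r ∈ Icc r0 r1, f'' r = -(E + c / r ^ 2) * f r) :
    ∀ r ∈ Icc r0 r1,
      E / (E + c / (2 * r0) ^ 2) * exp (-(c / (4 * r0 * √(E + c / (2 * r0) ^ 2)))) *
          (f r0 ^ 2 + E⁻¹ * f' r0 ^ 2) ≤ f r ^ 2 + E⁻¹ * f' r ^ 2 := by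
  intro r hr
  set Q := E + c / (2 * r0) ^ 2 with hQ_def
  set k := exp (-(c / (4 * r0 * √Q)))
  have hQ : 0 < Q := by positivity
  have hEQ : E ≤ Q := le_add_of_nonneg_right (by positivity)
  have hnear := energy_lower_bound_of_le_two_mul (b := min (2 * r0) r1) hE hc hr0 (min_le_left _ _)
    (fun r hr' => hf r ⟨hr'.1, hr'.2.trans (min_le_right _ _)⟩)
    (fun r hr' => hf' r ⟨hr'.1, hr'.2.trans (min_le_right _ _)⟩)
    (fun r hr' => hode r ⟨hr'.1, hr'.2.trans (min_le_right _ _)⟩)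
  have hstart :
      E / Q * k * (f r0 ^ 2 + E⁻¹ * f' r0 ^ 2) ≤ (Q * f r0 ^ 2 + f' r0 ^ 2) * k / Q := by
    rw [div_mul_eq_mul_div, div_mul_eq_mul_div, mul_right_comm]
    gcongr
    rw [mul_add, ← mul_assoc, mul_inv_cancel₀ hE.ne', one_mul]
    gcongr
  rcases le_or_gt r (2 * r0) with hle | hlt
  · calc E / Q * k * (f r0 ^ 2 + E⁻¹ * f' r0 ^ 2)
        ≤ (Q * f r0 ^ 2 + f' r0 ^ 2) * k / Q := hstart
      _ ≤ (Q * f r ^ 2 + f' r ^ 2) / Q := by gcongr; exact hnear r ⟨hr.1, le_min hle hr.2⟩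
      _ ≤ f r ^ 2 + E⁻¹ * f' r ^ 2 := by
        have : 1 ≤ E⁻¹ * Q := by rw [← div_eq_inv_mul, one_le_div hE]; exact hEQ
        rw [div_le_iff₀ hQ]
        nlinarith [sq_nonneg (f' r)]
  · have hpos : ∀ r ∈ Icc (2 * r0) r1, 0 < r := fun r hr' => by linarith [hr'.1]
    have hsub : Icc (2 * r0) r1 ⊆ Icc r0 r1 := Icc_subset_Icc (by linarith) le_rfl
    have hmono := monotoneOn_sq_add_sq_div (q := fun r => E + c / r ^ 2)
      (q' := fun r => -(2 * c / r ^ 3)) (fun r hr' => hf r (hsub hr'))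
      (fun r hr' => hf' r (hsub hr')) (fun r hr' => hode r (hsub hr'))
      (fun r hr' => by
        have := (hpos r hr').ne'
        exact ((hasDerivAt_const r E).add ((hasDerivAt_const r c).div (hasDerivAt_pow 2 r)
          (pow_ne_zero 2 this))).congr_deriv (by field_simp; ring))
      (fun r hr' => by have := hpos r hr'; positivity)
      (fun r hr' => by have := hpos r hr'; simp only [Left.neg_nonpos_iff]; positivity)
    calc E / Q * k * (f r0 ^ 2 + E⁻¹ * f' r0 ^ 2)
        ≤ (Q * f r0 ^ 2 + f' r0 ^ 2) * k / Q := hstart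
      _ ≤ (Q * f (2 * r0) ^ 2 + f' (2 * r0) ^ 2) / Q := by
        gcongr
        exact hnear (2 * r0) ⟨by linarith, le_min le_rfl (hlt.le.trans hr.2)⟩
      _ = f (2 * r0) ^ 2 + f' (2 * r0) ^ 2 / (E + c / (2 * r0) ^ 2) := by
        rw [hQ_def]
        field_simp
      _ ≤ f r ^ 2 + f' r ^ 2 / (E + c / r ^ 2) :=
        hmono ⟨le_rfl, by linarith [hr.2]⟩ ⟨hlt.le, hr.2⟩ hlt.le
      _ ≤ f r ^ 2 + E⁻¹ * f' r ^ 2 := by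
        have := hpos r ⟨hlt.le, hr.2⟩
        rw [div_eq_mul_inv, mul_comm]
        gcongr
        exact le_add_of_nonneg_right (by positivity)

end RadialSchrodinger

theorem stmt_15 (E : ℝ) (hE : 0 < E) (m : ℕ) (r0 r1 : ℝ) (hr0 : 0 < r0) (hr01 : r0 < r1)
    (f f' f'' : ℝ → ℝ) (C : ℝ)
    (hf : ∀ r ∈ Set.Icc r0 r1, HasDerivAt f (f' r) r)
    (hf' : ∀ r ∈ Set.Icc r0 r1, HasDerivAt f' (f'' r) r)
    (hode : ∀ r ∈ Set.Icc r0 r1,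
      -f'' r - (m * (m + 1) : ℝ) / r ^ 2 * f r = E * f r)
    (hint : ∫ r in Set.Icc r0 r1, (f r ^ 2 + E⁻¹ * f' r ^ 2) ≤ C) :
    f r0 ^ 2 + E⁻¹ * f' r0 ^ 2 ≤
      C / (r1 - r0) * Real.exp ((m * (m + 1) : ℝ) / (2 * Real.sqrt E * r0)) := by
  set c : ℝ := m * (m + 1)
  set J := c / (2 * √E * r0)
  have hc : c = 0 ∨ 4 / 3 ≤ c := by
    rcases m.eq_zero_or_pos with rfl | hm
    · simp [c]
    · have : (1 : ℝ) ≤ m := by exact_mod_cast hm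
      exact Or.inr (by nlinarith)
  have hlower : ∀ r ∈ Icc r0 r1,
      exp (-J) * (f r0 ^ 2 + E⁻¹ * f' r0 ^ 2) ≤ f r ^ 2 + E⁻¹ * f' r ^ 2 :=
    fun r hr => (mul_le_mul_of_nonneg_right (exp_neg_le_div_mul_exp_neg hE hr0 hc)
      (by positivity)).trans
      (sq_add_inv_mul_sq_lower_bound hE (by positivity) hr0 hf hf'
        (fun s hs => by linear_combination -hode s hs) r hr)
  have hcont : ContinuousOn (fun r => f r ^ 2 + E⁻¹ * f' r ^ 2) (Icc r0 r1) :=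
    ((HasDerivAt.continuousOn hf).pow 2).add
      (continuousOn_const.mul ((HasDerivAt.continuousOn hf').pow 2))
  have hmean := setIntegral_ge_of_const_le_real (μ := volume) measurableSet_Icc (by simp)
    hlower hcont.integrableOn_Icc
  rw [volume_real_Icc_of_le hr01.le] at hmean
  rw [div_mul_eq_mul_div, le_div_iff₀ (sub_pos.2 hr01)]
  calc (f r0 ^ 2 + E⁻¹ * f' r0 ^ 2) * (r1 - r0)
      = exp (-J) * (f r0 ^ 2 + E⁻¹ * f' r0 ^ 2) * (r1 - r0) * exp J := by
        rw [exp_neg]; field_simp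
    _ ≤ C * exp J := by gcongr; exact hmean.trans hint
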